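/- Finding Pivots lemma (mathematical content of Lemma 2.2, with k rounds of global relaxation): assume the uniqueness assumption holds. Let d̂ be an estimate function, S a finite set of vertices, B ∈ ℝ≥0∞, and k ≥ 1 a natural number. Assume that for every vertex v with d̂(v) ≠ d(v) and d(v) < B there exists a complete vertex u ∈ S such that the shortest path to v visits u. Let Ũ := {v : d(v) < B and there exists u ∈ S such that the shortest path to v visits u}. Then there exists a set P ⊆ S with k · |P| ≤ |Ũ| such that for every x ∈ Ũ, at least one of the following holds: (i) (R^k d̂)(x) = d(x), where R^k is the k-fold iterate of the relaxation operator R; (ii) there exists y ∈ P with d̂(y) = d(y) such that the shortest path to x visits y. -/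

import Mathlib

/-!
Under the uniqueness assumption a vertex `x` with `d x < ⊤` has exactly one shortest walk from
`s`; the shortest walk to a vertex on it is the prefix ending there, and the shortest path to
`x` visits `u` exactly when `u` lies on it. For `x ∈ Ũ` let `p x` be the first vertex of `S` on
this walk. The hypothesis on `S` makes `p x` complete. If `k` rounds of relaxation do not fix
`x`, the part of the walk from `p x` to `x` has more than `k` vertices, since relaxing along it
from the complete vertex `p x` would otherwise reach `d x`; each of these vertices lies in `Ũ`
and has the same first vertex `p x`. So for `P` the set of such `p x`, the fibres of `p` over
`P` are disjoint subsets of `Ũ` with more than `k` elements each.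
-/

open scoped ENNReal

namespace SSSP

variable {V : Type*}

/-- The weight of a walk (a list of vertices): the sum of `w` over consecutive pairs.
A one-vertex walk has weight 0. -/
noncomputable def walkWeight (w : V → V → ℝ≥0∞) : List V → ℝ≥0∞
  | [] => 0
  | [_] => 0
  | a :: b :: p => w a b + walkWeight w (b :: p)

/-- `p` is a walk from `u` to `v`: a nonempty list beginning at `u` and ending at `v`. -/
def IsWalk (u v : V) (p : List V) : Prop :=
  p ≠ [] ∧ p.head? = some u ∧ p.getLast? = some v

/-- The distance from `u` to `v`: the infimum of the weights of all walks from `u` to `v`. -/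
noncomputable def dist (w : V → V → ℝ≥0∞) (u v : V) : ℝ≥0∞ :=
  ⨅ p : {p : List V // IsWalk u v p}, walkWeight w p.1

/-- The shortest path (from `s`) to `v` visits `u`. -/
def Visits (w : V → V → ℝ≥0∞) (s u v : V) : Prop :=
  dist w s u + dist w u v = dist w s v

/-- The uniqueness assumption: any two distinct walks starting from `s` with finite
weight have different weights. -/
def UniqueWeights (w : V → V → ℝ≥0∞) (s : V) : Prop :=
  ∀ p q : List V, p ≠ [] → q ≠ [] → p.head? = some s → q.head? = some s →
    walkWeight w p ≠ ⊤ → walkWeight w q ≠ ⊤ → walkWeight w p = walkWeight w q → p = q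

/-- The relaxation operator. -/
noncomputable def relax (w : V → V → ℝ≥0∞) (f : V → ℝ≥0∞) : V → ℝ≥0∞ :=
  fun v => min (f v) (⨅ u, f u + w u v)

lemma eq_and_eq_of_add_le_add {a b c d : ℝ≥0∞} (hac : a ≤ c) (hbd : b ≤ d)
    (h : c + d ≤ a + b) (hcd : c + d ≠ ⊤) : a = c ∧ b = d := by
  have hd : d ≠ ⊤ := (ENNReal.add_ne_top.mp hcd).2
  have hc : c ≠ ⊤ := (ENNReal.add_ne_top.mp hcd).1
  refine ⟨hac.eq_of_not_lt fun hlt => ?_, hbd.eq_of_not_lt fun hlt => ?_⟩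
  · exact h.not_gt (ENNReal.add_lt_add_of_lt_of_le (ne_top_of_le_ne_top hd hbd) hlt hbd)
  · exact h.not_gt (ENNReal.add_lt_add_of_le_of_lt (ne_top_of_le_ne_top hc hac) hac hlt)

section Walks

variable (w : V → V → ℝ≥0∞) {u v x : V} {p : List V}

@[simp] lemma walkWeight_singleton (u : V) : walkWeight w [u] = 0 := rfl

@[simp] lemma walkWeight_cons_cons (a b : V) (p : List V) :
    walkWeight w (a :: b :: p) = w a b + walkWeight w (b :: p) := rfl

lemma walkWeight_append_cons (a : List V) (x : V) (b : List V) :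
    walkWeight w (a ++ x :: b) = walkWeight w (a ++ [x]) + walkWeight w (x :: b) := by
  induction a with
  | nil => simp
  | cons c a ih => cases a <;> simp_all [add_assoc]

lemma isWalk_iff : IsWalk u v p ↔ p.head? = some u ∧ p.getLast? = some v :=
  ⟨fun h => h.2, fun h => ⟨by rintro rfl; simp at h, h⟩⟩

lemma isWalk_append_cons_iff {a b : List V} :
    IsWalk u v (a ++ x :: b) ↔ IsWalk u x (a ++ [x]) ∧ IsWalk x v (x :: b) := by
  cases a <;> simp [isWalk_iff, List.getLast?_cons]

lemma IsWalk.exists_eq_cons (h : IsWalk u v p) : ∃ b, p = u :: b := by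
  cases p <;> simp_all [isWalk_iff]

lemma IsWalk.exists_eq_append_singleton (h : IsWalk u v p) : ∃ a, p = a ++ [v] :=
  ⟨p.dropLast, (List.dropLast_append_getLast? v h.2.2).symm⟩

lemma isWalk_pair (u v : V) : IsWalk u v [u, v] := by simp [isWalk_iff]

lemma dist_le_walkWeight (h : IsWalk u v p) : dist w u v ≤ walkWeight w p :=
  iInf_le (fun q : {q // IsWalk u v q} => walkWeight w q.1) ⟨p, h⟩

lemma dist_le_edge (u v : V) : dist w u v ≤ w u v := by
  simpa using dist_le_walkWeight w (isWalk_pair u v)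

lemma dist_triangle (s u v : V) : dist w s v ≤ dist w s u + dist w u v := by
  simp only [dist]
  rw [ENNReal.iInf_add]
  refine le_iInf fun p => ?_
  rw [ENNReal.add_iInf]
  refine le_iInf fun q => ?_
  obtain ⟨a, ha⟩ := p.2.exists_eq_append_singleton
  obtain ⟨b, hb⟩ := q.2.exists_eq_cons
  rw [ha, hb, ← walkWeight_append_cons]
  exact dist_le_walkWeight w (isWalk_append_cons_iff.mpr ⟨ha ▸ p.2, hb ▸ q.2⟩)

lemma exists_eq_append_cons_append_cons_of_not_nodup {l : List V} (h : ¬ l.Nodup) :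
    ∃ a x b c, l = a ++ x :: (b ++ x :: c) := by
  induction l with
  | nil => simp at h
  | cons y t ih =>
    by_cases hy : y ∈ t
    · obtain ⟨b, c, rfl⟩ := List.append_of_mem hy
      exact ⟨[], y, b, c, rfl⟩
    · obtain ⟨a, x, b, c, rfl⟩ := ih fun hn => h (List.nodup_cons.mpr ⟨hy, hn⟩)
      exact ⟨y :: a, x, b, c, rfl⟩

theorem exists_nodup_walk_le {p : List V} (h : IsWalk u v p) :
    ∃ q, IsWalk u v q ∧ q.Nodup ∧ walkWeight w q ≤ walkWeight w p := by
  by_cases hnd : p.Nodup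
  · exact ⟨p, h, hnd, le_rfl⟩
  obtain ⟨a, x, b, c, rfl⟩ := exists_eq_append_cons_append_cons_of_not_nodup hnd
  have hsplit : a ++ x :: (b ++ x :: c) = (a ++ x :: b) ++ x :: c := by simp
  rw [hsplit] at h
  obtain ⟨hax, hxc⟩ := isWalk_append_cons_iff.mp h
  rw [List.append_assoc, List.cons_append, isWalk_append_cons_iff] at hax
  obtain ⟨q, hq, hqnd, hqw⟩ :=
    exists_nodup_walk_le (isWalk_append_cons_iff.mpr ⟨hax.1, hxc⟩)
  refine ⟨q, hq, hqnd, hqw.trans ?_⟩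
  calc walkWeight w (a ++ x :: c) = walkWeight w (a ++ [x]) + walkWeight w (x :: c) :=
        walkWeight_append_cons w a x c
    _ ≤ walkWeight w (a ++ [x]) + (walkWeight w (x :: b ++ [x]) + walkWeight w (x :: c)) := by
        gcongr; exact le_add_self
    _ = walkWeight w (a ++ x :: (b ++ x :: c)) := by
        rw [walkWeight_append_cons w a x (b ++ x :: c), ← List.cons_append,
          walkWeight_append_cons w (x :: b) x c]
termination_by p.length
decreasing_by subst_vars; simp

def IsShortestWalk (u v : V) (p : List V) : Prop :=
  IsWalk u v p ∧ walkWeight w p = dist w u v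

lemma exists_isShortestWalk [Fintype V] (u v : V) : ∃ p, IsShortestWalk w u v p := by
  have hfin : {p : List V | IsWalk u v p ∧ p.Nodup}.Finite :=
    (List.finite_length_le V (Fintype.card V)).subset fun p hp => hp.2.length_le_card
  obtain ⟨q, hq, hqnd, -⟩ := exists_nodup_walk_le w (isWalk_pair u v)
  obtain ⟨p, hp, hmin⟩ := Set.exists_min_image _ (walkWeight w) hfin ⟨q, hq, hqnd⟩
  refine ⟨p, hp.1, le_antisymm (le_iInf fun q => ?_) (dist_le_walkWeight w hp.1)⟩
  obtain ⟨q', hq', hq'nd, hq'w⟩ := exists_nodup_walk_le w q.2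
  exact (hmin q' ⟨hq', hq'nd⟩).trans hq'w

end Walks

section ShortestWalks

variable {w : V → V → ℝ≥0∞} {s u v x : V} {a b p q : List V}

lemma Visits.dist_le (h : Visits w s u v) : dist w s u ≤ dist w s v :=
  h ▸ le_self_add

lemma IsShortestWalk.append_cons (h : IsShortestWalk w u v (a ++ x :: b))
    (hfin : dist w u v ≠ ⊤) :
    IsShortestWalk w u x (a ++ [x]) ∧ IsShortestWalk w x v (x :: b) := by
  obtain ⟨hax, hxb⟩ := isWalk_append_cons_iff.mp h.1
  have hsum := walkWeight_append_cons w a x b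
  rw [h.2] at hsum
  obtain ⟨h1, h2⟩ := eq_and_eq_of_add_le_add (dist_le_walkWeight w hax)
    (dist_le_walkWeight w hxb) (hsum ▸ dist_triangle w u x v) (hsum ▸ hfin)
  exact ⟨⟨hax, h1.symm⟩, ⟨hxb, h2.symm⟩⟩

lemma IsShortestWalk.visits (h : IsShortestWalk w s v (a ++ x :: b))
    (hfin : dist w s v ≠ ⊤) : Visits w s x v := by
  obtain ⟨h1, h2⟩ := h.append_cons hfin
  rw [Visits, ← h1.2, ← h2.2, ← walkWeight_append_cons, h.2]

lemma IsShortestWalk.append_cons_of_visits (h1 : IsShortestWalk w s x (a ++ [x]))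
    (h2 : IsShortestWalk w x v (x :: b)) (hv : Visits w s x v) :
    IsShortestWalk w s v (a ++ x :: b) :=
  ⟨isWalk_append_cons_iff.mpr ⟨h1.1, h2.1⟩, by rw [walkWeight_append_cons, h1.2, h2.2, hv]⟩

lemma UniqueWeights.eq_of_isShortestWalk (huniq : UniqueWeights w s)
    (hp : IsShortestWalk w s v p) (hq : IsShortestWalk w s v q) (hfin : dist w s v ≠ ⊤) :
    p = q :=
  huniq p q hp.1.1 hq.1.1 hp.1.2.1 hq.1.2.1 (hp.2 ▸ hfin) (hq.2 ▸ hfin) (hp.2.trans hq.2.symm)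

lemma UniqueWeights.nodup_of_isShortestWalk (huniq : UniqueWeights w s)
    (hp : IsShortestWalk w s v p) (hfin : dist w s v ≠ ⊤) : p.Nodup := by
  by_contra hnd
  obtain ⟨a, x, b, c, rfl⟩ := exists_eq_append_cons_append_cons_of_not_nodup hnd
  have hx : dist w s x ≠ ⊤ := ne_top_of_le_ne_top hfin (hp.visits hfin).dist_le
  have hsplit : a ++ x :: (b ++ x :: c) = (a ++ x :: b) ++ x :: c := by simp
  have h₁ := (hp.append_cons hfin).1
  have h₂ := ((hsplit ▸ hp).append_cons hfin).1
  have := congrArg List.length (huniq.eq_of_isShortestWalk h₁ h₂ hx)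
  simp at this

lemma UniqueWeights.visits_iff_mem [Fintype V] (huniq : UniqueWeights w s)
    (hp : IsShortestWalk w s v p) (hfin : dist w s v ≠ ⊤) : Visits w s u v ↔ u ∈ p := by
  constructor
  · intro hv
    obtain ⟨p₁, hp₁⟩ := exists_isShortestWalk w s u
    obtain ⟨p₂, hp₂⟩ := exists_isShortestWalk w u v
    obtain ⟨a, rfl⟩ := hp₁.1.exists_eq_append_singleton
    obtain ⟨b, rfl⟩ := hp₂.1.exists_eq_cons
    rw [huniq.eq_of_isShortestWalk hp (hp₁.append_cons_of_visits hp₂ hv) hfin]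
    simp
  · intro hu
    obtain ⟨a, b, rfl⟩ := List.append_of_mem hu
    exact hp.visits hfin

noncomputable def shortestWalk [Fintype V] (w : V → V → ℝ≥0∞) (u v : V) : List V :=
  (exists_isShortestWalk w u v).choose

lemma isShortestWalk_shortestWalk [Fintype V] (w : V → V → ℝ≥0∞) (u v : V) :
    IsShortestWalk w u v (shortestWalk w u v) :=
  (exists_isShortestWalk w u v).choose_spec

lemma UniqueWeights.shortestWalk_eq_of_eq_append_cons [Fintype V] (huniq : UniqueWeights w s)
    (h : shortestWalk w s v = a ++ x :: b) (hfin : dist w s v ≠ ⊤) :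
    shortestWalk w s x = a ++ [x] := by
  have hx := h ▸ isShortestWalk_shortestWalk w s v
  exact huniq.eq_of_isShortestWalk (isShortestWalk_shortestWalk w s x) (hx.append_cons hfin).1
    (ne_top_of_le_ne_top hfin (hx.visits hfin).dist_le)

end ShortestWalks

section Relaxation

variable (w : V → V → ℝ≥0∞) {s u v : V}

lemma iterate_relax_le (f : V → ℝ≥0∞) (k : ℕ) : (relax w)^[k] f ≤ f := by
  induction k with
  | zero => rfl
  | succ k ih =>
    rw [Function.iterate_succ_apply']
    exact fun v => (min_le_left _ _).trans (ih v)

lemma dist_le_relax {f : V → ℝ≥0∞} (hf : ∀ v, dist w s v ≤ f v) (v : V) :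
    dist w s v ≤ relax w f v :=
  le_min (hf v) <| le_iInf fun u =>
    (dist_triangle w s u v).trans (add_le_add (hf u) (dist_le_edge w u v))

lemma dist_le_iterate_relax {f : V → ℝ≥0∞} (hf : ∀ v, dist w s v ≤ f v) (k : ℕ) (v : V) :
    dist w s v ≤ (relax w)^[k] f v := by
  induction k generalizing v with
  | zero => exact hf v
  | succ k ih =>
    rw [Function.iterate_succ_apply']
    exact dist_le_relax w ih v

lemma iterate_relax_le_add_walkWeight (f : V → ℝ≥0∞) {q : List V} {j : ℕ}
    (hq : IsWalk u v (u :: q)) (hj : q.length ≤ j) :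
    (relax w)^[j] f v ≤ f u + walkWeight w (u :: q) := by
  induction q generalizing u j f with
  | nil =>
    obtain rfl : u = v := by simpa [isWalk_iff] using hq
    simpa using iterate_relax_le w f j u
  | cons b q ih =>
    obtain ⟨j, rfl⟩ : ∃ i, j = i + 1 := ⟨j - 1, by simp at hj; omega⟩
    have hb : IsWalk b v (b :: q) := by
      simpa [isWalk_iff, List.getLast?_cons] using hq
    rw [Function.iterate_succ_apply, walkWeight_cons_cons, ← add_assoc]
    refine (ih (relax w f) hb (by simpa using hj)).trans (add_le_add_left ?_ _)
    exact (min_le_right _ _).trans (iInf_le _ u)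

lemma IsShortestWalk.iterate_relax_eq_dist {dhat : V → ℝ≥0∞} {a b : List V} {k : ℕ}
    (hest : ∀ v, dist w s v ≤ dhat v) (hu : dhat u = dist w s u)
    (h : IsShortestWalk w s v (a ++ u :: b)) (hfin : dist w s v ≠ ⊤) (hk : b.length ≤ k) :
    (relax w)^[k] dhat v = dist w s v := by
  obtain ⟨-, hub⟩ := h.append_cons hfin
  refine le_antisymm ?_ (dist_le_iterate_relax w hest k v)
  calc (relax w)^[k] dhat v ≤ dhat u + walkWeight w (u :: b) :=
        iterate_relax_le_add_walkWeight w dhat hub.1 hk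
    _ = dist w s v := by rw [hu, hub.2, h.visits hfin]

end Relaxation

lemma mul_ncard_le_ncard_of_pairwiseDisjoint {α β : Type*} [Finite α] {k : ℕ} {P : Set β}
    {U : Set α} {F : β → Set α} (hP : P.Finite) (hF : P.PairwiseDisjoint F)
    (hFU : ∀ p ∈ P, F p ⊆ U) (hk : ∀ p ∈ P, k ≤ (F p).ncard) : k * P.ncard ≤ U.ncard := by
  lift P to Finset β using hP
  calc k * (P : Set β).ncard = ∑ _p ∈ P, k := by simp [mul_comm]
    _ ≤ ∑ p ∈ P, (F p).ncard := Finset.sum_le_sum hk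
    _ = (⋃ p ∈ (P : Set β), F p).ncard := by
        rw [Set.Finite.ncard_biUnion P.finite_toSet (fun _ _ => Set.toFinite _) hF,
          finsum_mem_coe_finset]
    _ ≤ U.ncard := Set.ncard_le_ncard (Set.iUnion₂_subset hFU)

section Pivots

variable [Fintype V] {w : V → V → ℝ≥0∞} {s x p : V} {S : Set V} [DecidablePred (· ∈ S)]

lemma UniqueWeights.exists_find?_shortestWalk_eq_some (huniq : UniqueWeights w s)
    (hfin : dist w s x ≠ ⊤) (h : ∃ u ∈ S, Visits w s u x) :
    ∃ p, (shortestWalk w s x).find? (· ∈ S) = some p := by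
  obtain ⟨u, huS, hu⟩ := h
  rw [← Option.isSome_iff_exists, List.find?_isSome]
  exact ⟨u, (huniq.visits_iff_mem (isShortestWalk_shortestWalk w s x) hfin).mp hu,
    decide_eq_true huS⟩

lemma visits_of_find?_shortestWalk_eq_some (hfin : dist w s x ≠ ⊤)
    (hp : (shortestWalk w s x).find? (· ∈ S) = some p) : Visits w s p x := by
  obtain ⟨-, a, b, hab, -⟩ := List.find?_eq_some_iff_append.mp hp
  exact (hab ▸ isShortestWalk_shortestWalk w s x).visits hfin

/-- A complete vertex of `S` visited by `p` would lie on the shortest walk to `p`, which is the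
prefix of the shortest walk to `x` ending at `p` and so meets `S` only in `p`. -/
lemma UniqueWeights.find?_shortestWalk_complete (huniq : UniqueWeights w s)
    {dhat : V → ℝ≥0∞} {B : ℝ≥0∞} (hS : ∀ v, dhat v ≠ dist w s v → dist w s v < B →
      ∃ u ∈ S, dhat u = dist w s u ∧ Visits w s u v)
    (hx : dist w s x < B) (hp : (shortestWalk w s x).find? (· ∈ S) = some p) :
    dhat p = dist w s p := by
  have hfin := (hx.trans_le le_top).ne
  obtain ⟨-, a, b, hab, ha⟩ := List.find?_eq_some_iff_append.mp hp
  have hpx := (visits_of_find?_shortestWalk_eq_some hfin hp).dist_le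
  by_contra hne
  obtain ⟨u, huS, hu, hup⟩ := hS p hne (hpx.trans_lt hx)
  have hmem := (huniq.visits_iff_mem (isShortestWalk_shortestWalk w s p)
    (ne_top_of_le_ne_top hfin hpx)).mp hup
  rw [huniq.shortestWalk_eq_of_eq_append_cons hab hfin, List.mem_append,
    List.mem_singleton] at hmem
  rcases hmem with hua | rfl
  · simpa [huS] using ha u hua
  · exact hne hu

lemma UniqueWeights.prefix_shortestWalk_of_mem (huniq : UniqueWeights w s) {a b : List V}
    {y : V} (hx : shortestWalk w s x = a ++ p :: b) (hfin : dist w s x ≠ ⊤) (hy : y ∈ p :: b) :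
    a ++ [p] <+: shortestWalk w s y := by
  obtain ⟨c, e, hce⟩ := List.append_of_mem hy
  rw [huniq.shortestWalk_eq_of_eq_append_cons (by rw [hx, hce, List.append_assoc]) hfin,
    List.append_assoc, List.prefix_append_right_inj]
  cases c <;> simp_all

lemma UniqueWeights.lt_ncard_fiber (huniq : UniqueWeights w s) {dhat : V → ℝ≥0∞}
    {B : ℝ≥0∞} {k : ℕ} (hest : ∀ v, dist w s v ≤ dhat v) (hx : dist w s x < B)
    (hbad : (relax w)^[k] dhat x ≠ dist w s x)
    (hp : (shortestWalk w s x).find? (· ∈ S) = some p) (hpc : dhat p = dist w s p) :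
    k < {y | dist w s y < B ∧ (shortestWalk w s y).find? (· ∈ S) = some p}.ncard := by
  classical
  have hfin := (hx.trans_le le_top).ne
  have hsx := isShortestWalk_shortestWalk w s x
  obtain ⟨hpS, a, b, hab, ha⟩ := List.find?_eq_some_iff_append.mp hp
  have hlen : k < (p :: b).length := by
    by_contra! hk
    exact hbad ((hab ▸ hsx).iterate_relax_eq_dist w hest hpc hfin (by simp at hk; omega))
  have hnd : (p :: b).Nodup :=
    (List.nodup_append.mp (hab ▸ huniq.nodup_of_isShortestWalk hsx hfin)).2.1
  rw [← List.toFinset_card_of_nodup hnd, ← Set.ncard_coe_finset] at hlen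
  refine hlen.trans_le (Set.ncard_le_ncard (fun y hy => ?_))
  have hyx : y ∈ shortestWalk w s x := hab ▸ List.mem_append_right a (by simpa using hy)
  refine ⟨(((huniq.visits_iff_mem hsx hfin).mpr hyx).dist_le).trans_lt hx, ?_⟩
  exact (huniq.prefix_shortestWalk_of_mem hab hfin (by simpa using hy)).find?_eq_some
    (List.find?_eq_some_iff_append.mpr ⟨hpS, a, [], rfl, ha⟩)

end Pivots

end SSSP

namespace SSSP

theorem finding_pivots_general {V : Type*} [Fintype V] (w : V → V → ℝ≥0∞) (s : V)
    (huniq : UniqueWeights w s)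
    (dhat : V → ℝ≥0∞) (hest : ∀ v, dist w s v ≤ dhat v)
    (S : Set V) (B : ℝ≥0∞) (k : ℕ)
    (hS : ∀ v, dhat v ≠ dist w s v → dist w s v < B →
      ∃ u ∈ S, dhat u = dist w s u ∧ Visits w s u v) :
    ∃ P ⊆ S,
      k * P.ncard ≤ ({v | dist w s v < B ∧ ∃ u ∈ S, Visits w s u v}).ncard ∧
      ∀ x ∈ {v | dist w s v < B ∧ ∃ u ∈ S, Visits w s u v},
        (relax w)^[k] dhat x = dist w s x ∨
        ∃ y ∈ P, dhat y = dist w s y ∧ Visits w s y x := by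
  classical
  set pivot : V → Option V := fun x => (shortestWalk w s x).find? (· ∈ S)
  have hfin {x : V} (hx : dist w s x < B) : dist w s x ≠ ⊤ := (hx.trans_le le_top).ne
  refine ⟨{p | ∃ x, dist w s x < B ∧ (relax w)^[k] dhat x ≠ dist w s x ∧ pivot x = some p},
    ?_, ?_, ?_⟩
  · rintro p ⟨x, -, -, hp⟩
    simpa using List.find?_some hp
  · refine mul_ncard_le_ncard_of_pairwiseDisjoint (Set.toFinite _)
      (F := fun p => {y | dist w s y < B ∧ pivot y = some p}) ?_ ?_ ?_
    · exact fun p _ q _ hpq => Set.disjoint_left.mpr fun y hp hq =>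
        hpq (Option.some_injective _ (hp.2.symm.trans hq.2))
    · rintro p - y ⟨hy, hyp⟩
      exact ⟨hy, p, by simpa using List.find?_some hyp,
        visits_of_find?_shortestWalk_eq_some (hfin hy) hyp⟩
    · rintro p ⟨x, hx, hbad, hp⟩
      exact (huniq.lt_ncard_fiber hest hx hbad hp (huniq.find?_shortestWalk_complete hS hx hp)).le
  · rintro x ⟨hx, hxS⟩
    refine or_iff_not_imp_left.mpr fun hbad => ?_
    obtain ⟨p, hp⟩ := huniq.exists_find?_shortestWalk_eq_some (hfin hx) hxS
    exact ⟨p, ⟨x, hx, hbad, hp⟩, huniq.find?_shortestWalk_complete hS hx hp,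
      visits_of_find?_shortestWalk_eq_some (hfin hx) hp⟩

/-- Finding Pivots lemma (mathematical content of Lemma 2.2 with `k` rounds of
global relaxation). -/
theorem finding_pivots {V : Type*} [Fintype V] (w : V → V → ℝ≥0∞) (s : V)
    (huniq : UniqueWeights w s)
    (dhat : V → ℝ≥0∞) (hest : ∀ v, dist w s v ≤ dhat v)
    (S : Set V) (B : ℝ≥0∞) (k : ℕ) (hk : 1 ≤ k)
    (hS : ∀ v, dhat v ≠ dist w s v → dist w s v < B →
      ∃ u ∈ S, dhat u = dist w s u ∧ Visits w s u v) :
    ∃ P ⊆ S,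
      k * P.ncard ≤ ({v | dist w s v < B ∧ ∃ u ∈ S, Visits w s u v}).ncard ∧
      ∀ x ∈ {v | dist w s v < B ∧ ∃ u ∈ S, Visits w s u v},
        (relax w)^[k] dhat x = dist w s x ∨
        ∃ y ∈ P, dhat y = dist w s y ∧ Visits w s y x :=
  finding_pivots_general w s huniq dhat hest S B k hS

end SSSP
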